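/- For an odd positive integer N, an integer l with |l| > 2 and l ≡ 2 (mod N), the bijection ψ: Γ_{1,l}(N) → Q_l(N), γ ↦ q_γ, is equivariant for the Γ₁(N)-actions: for all δ ∈ Γ₁(N) and γ ∈ Γ_{1,l}(N), ψ(δ⁻¹γδ) = ψ(γ) ∘ δ, where (q ∘ δ)(X,Y) = q((X,Y)·δᵗ). Consequently ψ induces a bijection Γ_{1,l}(N)/Γ₁(N) ≅ Q_l(N)/Γ₁(N). -/

import Mathlib

/-- The congruence subgroup `Γ₁(N)`, as a set of integer 2×2 matrices. -/
def Gamma1Set (N : ℕ) : Set (Matrix (Fin 2) (Fin 2) ℤ) :=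
  {δ | δ.det = 1 ∧ (N : ℤ) ∣ (δ 0 0 - 1) ∧ (N : ℤ) ∣ (δ 1 1 - 1) ∧ (N : ℤ) ∣ δ 1 0}

/-- Matrices of `Γ₁(N)` with trace `l`. -/
def Gamma1lSet (N : ℕ) (l : ℤ) : Set (Matrix (Fin 2) (Fin 2) ℤ) :=
  {γ ∈ Gamma1Set N | γ.trace = l}

/-- `Q_l(N)`: integral binary quadratic forms `[A, B, C] = A X² + B XY + C Y²` with
`N ∣ A`, `N ∣ B` and discriminant `l² − 4`, encoded as coefficient triples. -/
def QlSet (N : ℕ) (l : ℤ) : Set (ℤ × ℤ × ℤ) :=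
  {q | (N : ℤ) ∣ q.1 ∧ (N : ℤ) ∣ q.2.1 ∧ q.2.1 ^ 2 - 4 * q.1 * q.2.2 = l ^ 2 - 4}

/-- The map `ψ : γ ↦ q_γ`. -/
def psiForm (γ : Matrix (Fin 2) (Fin 2) ℤ) : ℤ × ℤ × ℤ :=
  (γ 1 0, γ 1 1 - γ 0 0, -γ 0 1)

/-- The action of `δ = [[x,y],[z,t]]` on a form `q = [A,B,C]`:
`q ∘ δ = [q(x,z), B(xt+yz) + 2(Axy+Czt), q(y,t)]`, i.e. `(q ∘ δ)(X,Y) = q((X,Y)δᵗ)`. -/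
def formAct (q : ℤ × ℤ × ℤ) (δ : Matrix (Fin 2) (Fin 2) ℤ) : ℤ × ℤ × ℤ :=
  (q.1 * (δ 0 0) ^ 2 + q.2.1 * (δ 0 0) * (δ 1 0) + q.2.2 * (δ 1 0) ^ 2,
   q.2.1 * (δ 0 0 * δ 1 1 + δ 0 1 * δ 1 0) + 2 * (q.1 * δ 0 0 * δ 0 1 + q.2.2 * δ 1 0 * δ 1 1),
   q.1 * (δ 0 1) ^ 2 + q.2.1 * (δ 0 1) * (δ 1 1) + q.2.2 * (δ 1 1) ^ 2)

/-- The inverse (adjugate) of a determinant-one 2×2 matrix `δ`. -/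
def adjInv (δ : Matrix (Fin 2) (Fin 2) ℤ) : Matrix (Fin 2) (Fin 2) ℤ :=
  !![δ 1 1, -δ 0 1; -δ 1 0, δ 0 0]


/-!
Conjugation by `δ` corresponds to substituting `(X, Y)δᵗ` into the form, which is a polynomial
identity in the entries. Since `ψ` only forgets the trace (`γ 0 0 + γ 1 1`), it is injective on
matrices of a fixed trace `l`, and the determinant condition becomes the discriminant condition.
Conversely a form `[A, B, C]` of discriminant `l² − 4` has `B ≡ l (mod 2)`, so
`[[(l − B)/2, −C], [A, (l + B)/2]]` is a preimage, which lies in `Γ₁(N)` because `N` is odd.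
An equivariant bijection then matches the two orbit relations, hence the orbit spaces.
-/

open Matrix

lemma adjInv_eq_adjugate (δ : Matrix (Fin 2) (Fin 2) ℤ) : adjInv δ = δ.adjugate :=
  (adjugate_fin_two δ).symm

lemma psiForm_adjInv_mul_mul (δ γ : Matrix (Fin 2) (Fin 2) ℤ) :
    psiForm (adjInv δ * γ * δ) = formAct (psiForm γ) δ := by
  simp only [psiForm, formAct, adjInv, mul_apply, Fin.sum_univ_two, of_apply, cons_val',
    cons_val_zero, cons_val_one, empty_val', cons_val_fin_one, Prod.mk.injEq]
  exact ⟨by ring, by ring, by ring⟩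

lemma trace_adjInv_mul_mul {δ : Matrix (Fin 2) (Fin 2) ℤ} (hδ : δ.det = 1)
    (γ : Matrix (Fin 2) (Fin 2) ℤ) : (adjInv δ * γ * δ).trace = γ.trace := by
  rw [trace_mul_comm, ← mul_assoc, adjInv_eq_adjugate, mul_adjugate, hδ, one_smul, one_mul]

lemma eq_of_psiForm_eq_of_trace_eq {γ γ' : Matrix (Fin 2) (Fin 2) ℤ}
    (ht : γ.trace = γ'.trace) (h : psiForm γ = psiForm γ') : γ = γ' := by
  rw [trace_fin_two, trace_fin_two] at ht
  simp only [psiForm, Prod.mk.injEq, neg_inj] at h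
  ext i j
  fin_cases i <;> fin_cases j <;> dsimp <;> omega

lemma eq_adjInv_mul_mul_iff {δ γ γ' : Matrix (Fin 2) (Fin 2) ℤ} (hδ : δ.det = 1)
    (ht : γ.trace = γ'.trace) :
    γ' = adjInv δ * γ * δ ↔ psiForm γ' = formAct (psiForm γ) δ := by
  rw [← psiForm_adjInv_mul_mul]
  refine ⟨congrArg psiForm, eq_of_psiForm_eq_of_trace_eq ?_⟩
  rw [trace_adjInv_mul_mul hδ, ht]

lemma psiForm_mem_QlSet {N : ℕ} {l : ℤ} {γ : Matrix (Fin 2) (Fin 2) ℤ}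
    (hγ : γ ∈ Gamma1lSet N l) : psiForm γ ∈ QlSet N l := by
  obtain ⟨⟨hdet, h00, h11, h10⟩, htr⟩ := hγ
  rw [det_fin_two] at hdet
  rw [trace_fin_two] at htr
  simp only [psiForm]
  refine ⟨h10, by simpa using dvd_sub h11 h00, ?_⟩
  rw [← htr]
  linear_combination (-4) * hdet

lemma two_dvd_sub_of_discr_eq {A B C l : ℤ} (h : B ^ 2 - 4 * A * C = l ^ 2 - 4) :
    2 ∣ l - B := by
  have hsq : Even (l ^ 2 - B ^ 2) := ⟨2 - 2 * A * C, by linear_combination -h⟩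
  rw [← even_iff_two_dvd]
  rw [Int.even_sub] at hsq ⊢
  simpa [Int.even_pow] using hsq

lemma Int.dvd_of_odd_of_dvd_two_mul {n a : ℤ} (hn : Odd n) (h : n ∣ 2 * a) : n ∣ a := by
  obtain ⟨k, rfl⟩ := hn
  exact (show IsCoprime (2 * k + 1) 2 from ⟨1, -k, by ring⟩).dvd_of_dvd_mul_left h

lemma surjOn_psiForm {N : ℕ} (hN : Odd N) {l : ℤ} (hlN : (N : ℤ) ∣ l - 2) :
    Set.SurjOn psiForm (Gamma1lSet N l) (QlSet N l) := by
  rintro ⟨A, B, C⟩ ⟨hA, hB, hdisc⟩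
  dsimp only at hA hB hdisc
  obtain ⟨m, hm⟩ := two_dvd_sub_of_discr_eq hdisc
  obtain rfl : B = l - 2 * m := by omega
  have hdet : m * (l - m) + C * A = 1 :=
    mul_left_cancel₀ (four_ne_zero' ℤ) (by linear_combination -hdisc)
  refine ⟨!![m, -C; A, l - m], ⟨⟨?_, ?_, ?_, ?_⟩, ?_⟩, ?_⟩
  · simpa [det_fin_two] using hdet
  · refine Int.dvd_of_odd_of_dvd_two_mul hN.natCast ?_
    simpa [show l - 2 - (l - 2 * m) = 2 * (m - 1) by ring] using dvd_sub hlN hB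
  · refine Int.dvd_of_odd_of_dvd_two_mul hN.natCast ?_
    simpa [show l - 2 + (l - 2 * m) = 2 * (l - m - 1) by ring] using dvd_add hlN hB
  · simpa using hA
  · simp [trace_fin_two]
  · simp only [psiForm, of_apply, cons_val', cons_val_zero, cons_val_one, empty_val',
      cons_val_fin_one, neg_neg, Prod.mk.injEq]
    exact ⟨trivial, by ring, trivial⟩

lemma bijOn_psiForm {N : ℕ} (hN : Odd N) {l : ℤ} (hlN : (N : ℤ) ∣ l - 2) :
    Set.BijOn psiForm (Gamma1lSet N l) (QlSet N l) :=
  ⟨fun _ => psiForm_mem_QlSet,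
    fun _ hγ _ hγ' => eq_of_psiForm_eq_of_trace_eq (hγ.2.trans hγ'.2.symm),
    surjOn_psiForm hN hlN⟩

theorem psi_equivariant_and_quotient_bij_general (N : ℕ) (hN : Odd N) (l : ℤ)
    (hlN : (N : ℤ) ∣ (l - 2)) :
    (∀ δ ∈ Gamma1Set N, ∀ γ ∈ Gamma1lSet N l,
        psiForm (adjInv δ * γ * δ) = formAct (psiForm γ) δ) ∧
    ∃ F : Quot (fun γ γ' : {γ // γ ∈ Gamma1lSet N l} =>
            ∃ δ ∈ Gamma1Set N, γ'.val = adjInv δ * γ.val * δ) →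
          Quot (fun q q' : {q // q ∈ QlSet N l} =>
            ∃ δ ∈ Gamma1Set N, q'.val = formAct q.val δ),
      Function.Bijective F ∧
      ∀ (γ : {γ // γ ∈ Gamma1lSet N l}) (q : {q // q ∈ QlSet N l}),
        q.val = psiForm γ.val → F (Quot.mk _ γ) = Quot.mk _ q := by
  refine ⟨fun δ _ γ _ => psiForm_adjInv_mul_mul δ γ, ?_⟩
  refine ⟨Quot.congr ((bijOn_psiForm hN hlN).equiv psiForm) fun γ γ' =>
      exists_congr fun δ => and_congr_right fun (hδ : δ ∈ Gamma1Set N) =>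
        eq_adjInv_mul_mul_iff hδ.1 (γ.2.2.trans γ'.2.2.symm),
    Equiv.bijective _, fun γ q hq => ?_⟩
  exact congrArg (Quot.mk _) (Subtype.ext hq.symm)

/-- `ψ` is equivariant: `ψ(δ⁻¹γδ) = ψ(γ) ∘ δ` for `δ ∈ Γ₁(N)`,
`γ ∈ Γ_{1,l}(N)`; consequently it induces a bijection
`Γ_{1,l}(N)/Γ₁(N) ≅ Q_l(N)/Γ₁(N)`. -/
theorem psi_equivariant_and_quotient_bij (N : ℕ) (hN : Odd N) (hNpos : 0 < N) (l : ℤ)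
    (hl : 2 < |l|) (hlN : (N : ℤ) ∣ (l - 2)) :
    (∀ δ ∈ Gamma1Set N, ∀ γ ∈ Gamma1lSet N l,
        psiForm (adjInv δ * γ * δ) = formAct (psiForm γ) δ) ∧
    ∃ F : Quot (fun γ γ' : {γ // γ ∈ Gamma1lSet N l} =>
            ∃ δ ∈ Gamma1Set N, γ'.val = adjInv δ * γ.val * δ) →
          Quot (fun q q' : {q // q ∈ QlSet N l} =>
            ∃ δ ∈ Gamma1Set N, q'.val = formAct q.val δ),
      Function.Bijective F ∧
      ∀ (γ : {γ // γ ∈ Gamma1lSet N l}) (q : {q // q ∈ QlSet N l}),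
        q.val = psiForm γ.val → F (Quot.mk _ γ) = Quot.mk _ q :=
  psi_equivariant_and_quotient_bij_general N hN l hlN
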